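/- Let F₄ be the finite field with four elements. For every LPP g over F₄ there exist a, b, c, d, b', c', d' ∈ F₄ with b³ + c³ = 1 and b'³ + c'³ = 1 such that g(x,y) = f(bx² + cx + d, b'y² + c'y + d') for all x, y, where f(x,y) = (a³xy + a(x+y) + a²)xy + x + y. -/

import Mathlib

/-!
Let `g(0, y₀) = 0`. Precomposing `g` with the inverses of the bijections `x ↦ g(x, y₀)` and
`y ↦ g(0, y)` gives an LPP `h` with `h(0, v) = v` and `h(u, 0) = u`, i.e. a normalized Latin square,
and `g(x, y) = h(g(x, y₀), g(0, y))`. Over a field with four elements two finite facts finish the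
proof: every permutation is `x ↦ b x² + c x + d` with `b³ + c³ = 1` (the Frobenius map is additive
and the nonzero cubes equal `1`, so this says that exactly one of `b`, `c` is nonzero), and the
normalized Latin squares of order `4` are exactly the four maps `f_a`. Both are checked by `decide`
in a computable model of `F₄` and transported along a ring isomorphism.
-/

/-- The field with four elements. -/
abbrev F₄ : Type := GaloisField 2 2

/-- `f : F × F → F` is a local permutation polynomial if both sections
`x ↦ f (x, a)` and `x ↦ f (a, x)` are bijections of `F` for every `a`. -/
def IsLPP {F : Type*} (f : F × F → F) : Prop :=
  ∀ a : F, Function.Bijective (fun x => f (x, a)) ∧ Function.Bijective (fun x => f (a, x))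

section IsLPP

variable {F G : Type*}

theorem IsLPP.comp_prodMap {g : F × F → F} (hg : IsLPP g) (ρ : F ≃ G) (σ τ : G ≃ F) :
    IsLPP (ρ ∘ g ∘ Prod.map σ τ) := fun a =>
  ⟨ρ.bijective.comp ((hg (τ a)).1.comp σ.bijective),
    ρ.bijective.comp ((hg (σ a)).2.comp τ.bijective)⟩

theorem IsLPP.exists_normalized [Zero F] {g : F × F → F} (hg : IsLPP g) :
    ∃ (y₀ : F) (h : F × F → F), IsLPP h ∧ (∀ v, h (0, v) = v) ∧ (∀ u, h (u, 0) = u) ∧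
      ∀ x y, g (x, y) = h (g (x, y₀), g (0, y)) := by
  obtain ⟨y₀, hy₀⟩ := (hg 0).2.surjective 0
  let P := Equiv.ofBijective _ (hg y₀).1
  let Q := Equiv.ofBijective _ (hg 0).2
  have hP : P.symm 0 = 0 := P.symm_apply_eq.2 hy₀.symm
  have hQ : Q.symm 0 = y₀ := Q.symm_apply_eq.2 hy₀.symm
  refine ⟨y₀, g ∘ Prod.map P.symm Q.symm, hg.comp_prodMap (Equiv.refl F) _ _, fun v => ?_,
    fun u => ?_, fun x y => ?_⟩
  · show g (P.symm 0, Q.symm v) = v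
    rw [hP]
    exact Q.apply_symm_apply v
  · show g (P.symm u, Q.symm 0) = u
    rw [hQ]
    exact P.apply_symm_apply u
  · show g (x, y) = g (P.symm (P x), Q.symm (Q y))
    rw [P.symm_apply_apply, Q.symm_apply_apply]

end IsLPP

def modelLPP {R : Type*} [CommRing R] (a : R) (p : R × R) : R :=
  (a ^ 3 * p.1 * p.2 + a * (p.1 + p.2) + a ^ 2) * p.1 * p.2 + p.1 + p.2

theorem map_modelLPP {R S 𝓕 : Type*} [CommRing R] [CommRing S] [FunLike 𝓕 R S]
    [RingHomClass 𝓕 R S] (φ : 𝓕) (a : R) (p : R × R) :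
    φ (modelLPP a p) = modelLPP (φ a) (φ p.1, φ p.2) := by
  simp [modelLPP]

/-- `ω` and `ω' = ω² = ω + 1` are the roots of `X² + X + 1`. -/
inductive GF4 : Type
  | zero | one | ω | ω'
  deriving DecidableEq

namespace GF4

instance : Fintype GF4 := ⟨{zero, one, ω, ω'}, fun x => by cases x <;> decide⟩

def add : GF4 → GF4 → GF4
  | zero, x | x, zero => x
  | one, one | ω, ω | ω', ω' => zero
  | one, ω | ω, one => ω'
  | one, ω' | ω', one => ω
  | ω, ω' | ω', ω => one

def mul : GF4 → GF4 → GF4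
  | zero, _ | _, zero => zero
  | one, x | x, one => x
  | ω, ω => ω'
  | ω', ω' => ω
  | ω, ω' | ω', ω => one

def inv : GF4 → GF4
  | zero => zero
  | one => one
  | ω => ω'
  | ω' => ω

instance : Zero GF4 := ⟨zero⟩
instance : One GF4 := ⟨one⟩
instance : Add GF4 := ⟨add⟩
instance : Mul GF4 := ⟨mul⟩
instance : Neg GF4 := ⟨id⟩
instance : Inv GF4 := ⟨inv⟩

instance : CommRing GF4 where
  add_assoc := by decide
  zero_add := by decide
  add_zero := by decide
  add_comm := by decide
  mul_assoc := by decide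
  one_mul := by decide
  mul_one := by decide
  left_distrib := by decide
  right_distrib := by decide
  zero_mul := by decide
  mul_zero := by decide
  neg_add_cancel := by decide
  mul_comm := by decide
  nsmul := nsmulRec
  zsmul := zsmulRec

instance : Field GF4 where
  exists_pair_ne := ⟨zero, one, by decide⟩
  mul_inv_cancel := by decide
  inv_zero := rfl
  nnqsmul := _
  qsmul := _

theorem nonempty_ringEquiv {K : Type*} [Field K] [Finite K] (hK : Nat.card K = 4) :
    Nonempty (GF4 ≃+* K) :=
  have := Fintype.ofFinite K
  ⟨FiniteField.ringEquivOfCardEq (by rw [Fintype.card_eq_nat_card (α := K), hK]; rfl)⟩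

set_option maxRecDepth 2000 in
theorem exists_quadratic_eq_of_bijective : ∀ p : GF4 → GF4, Function.Bijective p →
    ∃ b c d : GF4, b ^ 3 + c ^ 3 = 1 ∧ ∀ x, p x = b * x ^ 2 + c * x + d := by
  decide

set_option maxRecDepth 5000 in
/-- The `rᵢ` are the rows `1`, `ω`, `ω'` of a normalized Latin square; the `Nodup` hypothesis says
that its columns are injective. -/
theorem rows_eq_modelLPP : ∀ r₁ r₂ r₃ : Equiv.Perm GF4, r₁ 0 = 1 → r₂ 0 = ω → r₃ 0 = ω' →
    (∀ v, [v, r₁ v, r₂ v, r₃ v].Nodup) →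
    ∃ a, ∀ v, r₁ v = modelLPP a (1, v) ∧ r₂ v = modelLPP a (ω, v) ∧
      r₃ v = modelLPP a (ω', v) := by
  decide

theorem exists_modelLPP_eq {h : GF4 × GF4 → GF4} (hh : IsLPP h) (h₀ : ∀ v, h (0, v) = v)
    (h₀' : ∀ u, h (u, 0) = u) : ∃ a, h = modelLPP a := by
  have col_nodup (v : GF4) : [v, h (1, v), h (ω, v), h (ω', v)].Nodup := by
    simpa [h₀] using (show [0, 1, ω, ω'].Nodup by decide).map (hh v).1.injective
  obtain ⟨a, ha⟩ := rows_eq_modelLPP (.ofBijective _ (hh 1).2) (.ofBijective _ (hh ω).2)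
    (.ofBijective _ (hh ω').2) (h₀' 1) (h₀' ω) (h₀' ω') col_nodup
  refine ⟨a, funext fun ⟨u, v⟩ => ?_⟩
  cases u
  · exact (h₀ v).trans (by simp [modelLPP] : modelLPP a (0, v) = v).symm
  exacts [(ha v).1, (ha v).2.1, (ha v).2.2]

end GF4

section CardFour

variable {K : Type*} [Field K] [Finite K]

theorem exists_quadratic_eq_of_bijective_of_card_eq_four (hK : Nat.card K = 4) {p : K → K}
    (hp : Function.Bijective p) :
    ∃ b c d : K, b ^ 3 + c ^ 3 = 1 ∧ ∀ x, p x = b * x ^ 2 + c * x + d := by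
  obtain ⟨e⟩ := GF4.nonempty_ringEquiv hK
  obtain ⟨b, c, d, hbc, hq⟩ := GF4.exists_quadratic_eq_of_bijective (e.symm ∘ p ∘ e)
    (e.symm.bijective.comp (hp.comp e.bijective))
  refine ⟨e b, e c, e d, by rw [← map_pow, ← map_pow, ← map_add, hbc, map_one], fun x => ?_⟩
  simpa using congrArg e (hq (e.symm x))

theorem exists_modelLPP_eq_of_card_eq_four (hK : Nat.card K = 4) {h : K × K → K} (hh : IsLPP h)
    (h₀ : ∀ v, h (0, v) = v) (h₀' : ∀ u, h (u, 0) = u) : ∃ a, h = modelLPP a := by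
  obtain ⟨e⟩ := GF4.nonempty_ringEquiv hK
  obtain ⟨a, ha⟩ := GF4.exists_modelLPP_eq (hh.comp_prodMap e.symm.toEquiv e.toEquiv e.toEquiv)
    (fun v => by simp [h₀]) (fun u => by simp [h₀'])
  refine ⟨e a, funext fun p => ?_⟩
  simpa [map_modelLPP] using congrArg e (congrFun ha (e.symm p.1, e.symm p.2))

end CardFour

/-- Every LPP `g` over `F₄` is of the form
`g (x, y) = f (b x² + c x + d, b' y² + c' y + d')` where
`f (u, v) = (a³uv + a(u+v) + a²)uv + u + v`, `b³ + c³ = 1` and `b'³ + c'³ = 1`. -/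
theorem stmt_13 (g : F₄ × F₄ → F₄) (hg : IsLPP g) :
    ∃ a b c d b' c' d' : F₄,
      b ^ 3 + c ^ 3 = 1 ∧ b' ^ 3 + c' ^ 3 = 1 ∧
      ∀ x y : F₄, g (x, y) =
        (fun p : F₄ × F₄ =>
            (a ^ 3 * p.1 * p.2 + a * (p.1 + p.2) + a ^ 2) * p.1 * p.2 + p.1 + p.2)
          (b * x ^ 2 + c * x + d, b' * y ^ 2 + c' * y + d') := by
  have hcard : Nat.card F₄ = 4 := GaloisField.card 2 2 two_ne_zero
  obtain ⟨y₀, h, hh, h₀, h₀', hg_eq⟩ := hg.exists_normalized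
  obtain ⟨a, rfl⟩ := exists_modelLPP_eq_of_card_eq_four hcard hh h₀ h₀'
  obtain ⟨b, c, d, hbc, hP⟩ := exists_quadratic_eq_of_bijective_of_card_eq_four hcard (hg y₀).1
  obtain ⟨b', c', d', hbc', hQ⟩ := exists_quadratic_eq_of_bijective_of_card_eq_four hcard (hg 0).2
  refine ⟨a, b, c, d, b', c', d', hbc, hbc', fun x y => ?_⟩
  rw [hg_eq, hP, hQ]
  rfl
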